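/- Let p be an odd prime, e ≥ 1, n = p^e, 1 ≤ f ≤ e. The commutator subgroup of G_f = ⟨g, h | g^n = h^n = 1, g⁻¹hg = h^(1+p^f)⟩ equals ⟨h^(p^f)⟩, a cyclic group of order p^(e-f); consequently the abelianization of G_f is isomorphic to C_n × C_(p^f). -/

import Mathlib

/-- The relations for the group `G_f = ⟨g, h | g^n = h^n = 1, g⁻¹hg = h^q⟩`. -/
def fermatRels (n q : ℕ) : Set (FreeGroup (Fin 2)) :=
  {FreeGroup.of 0 ^ n, FreeGroup.of 1 ^ n,
   (FreeGroup.of 0)⁻¹ * FreeGroup.of 1 * FreeGroup.of 0 * (FreeGroup.of 1 ^ q)⁻¹}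

/-- The group `G_f` (with `n = p^e`, `q = 1 + p^f`). -/
abbrev Gf (n q : ℕ) := PresentedGroup (fermatRels n q)

/-- The generator `g` of `G_f`. -/
def gGen (n q : ℕ) : Gf n q := PresentedGroup.of 0

/-- The generator `h` of `G_f`. -/
def hGen (n q : ℕ) : Gf n q := PresentedGroup.of 1

/-!
The affine maps `x ↦ q⁻¹ * x` and `x ↦ x + 1` of `ZMod n` satisfy the defining relations as soon
as `q ^ n = 1` in `ZMod n`, which holds for `q = 1 + p ^ f` because `p ∣ q - 1` forces
`p ^ (e + 1) ∣ q ^ p ^ e - 1`; as the translation has order `n`, so does `h`. The relation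
`g⁻¹ h g = h ^ (1 + p ^ f)` makes `h ^ p ^ f` a commutator, and makes both generators normalise the
finite cyclic group `⟨h ^ p ^ f⟩`; modulo that group `g` and `h` commute, so it is the whole
commutator subgroup. In the abelianization the relations become `g ^ n = 1` and `h ^ p ^ f = 1`,
which present `C_n × C_(p ^ f)`.
-/

open Subgroup
open scoped commutatorElement

section Commutator

variable {G : Type*} [Group G]

theorem conj_mem_zpowers_of_conj_eq_pow {x a y : G} {k : ℕ} (hx : x * a * x⁻¹ = a ^ k)
    (hy : y ∈ zpowers a) : x * y * x⁻¹ ∈ zpowers a := by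
  obtain ⟨m, rfl⟩ := mem_zpowers_iff.mp hy
  rw [← conj_zpow, hx]
  exact zpow_mem (pow_mem (mem_zpowers a) k) m

theorem Subgroup.normal_zpowers_of_conj_eq_pow {S : Set G} (hS : closure S = ⊤) {a : G}
    (ha : IsOfFinOrder a) (hconj : ∀ s ∈ S, ∃ k : ℕ, s⁻¹ * a * s = a ^ k) :
    (zpowers a).Normal := by
  have : Finite (zpowers a : Set G) := ha.finite_zpowers
  refine normalizer_eq_top_iff.mp (eq_top_iff.mpr ?_)
  rw [← hS, closure_le]
  intro s hs
  obtain ⟨k, hk⟩ := hconj s hs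
  rw [SetLike.mem_coe, ← inv_mem_iff]
  refine mem_normalizer_fintype fun y hy ↦ ?_
  exact conj_mem_zpowers_of_conj_eq_pow (by rwa [inv_inv]) hy

theorem commutator_le_of_closure_eq_top {S : Set G} (hS : closure S = ⊤) {N : Subgroup G}
    [N.Normal] (hN : ∀ s ∈ S, ∀ t ∈ S, (t * s)⁻¹ * (s * t) ∈ N) : commutator G ≤ N := by
  set π := QuotientGroup.mk' N
  have hcomm : ∀ x ∈ π '' S, ∀ y ∈ π '' S, x * y = y * x := by
    rintro _ ⟨s, hs, rfl⟩ _ ⟨t, ht, rfl⟩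
    rw [← map_mul, ← map_mul, eq_comm]
    exact (QuotientGroup.eq).mpr (hN s hs t ht)
  have hgen : closure (π '' S) = ⊤ := by
    rw [← MonoidHom.map_closure, hS, ← MonoidHom.range_eq_map,
      MonoidHom.range_eq_top_of_surjective _ (QuotientGroup.mk'_surjective N)]
  rw [commutator_def, commutator_le]
  intro x _ y _
  have hmem : ∀ z : G ⧸ N, z ∈ closure (π '' S) := fun z ↦ hgen ▸ mem_top z
  rw [← QuotientGroup.eq_one_iff, ← QuotientGroup.mk'_apply, map_commutatorElement,
    commutatorElement_eq_one_iff_mul_comm]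
  exact Set.centralizer_centralizer_comm_of_comm hcomm _
    (closure_le_centralizer_centralizer _ (hmem _)) _
    (closure_le_centralizer_centralizer _ (hmem _))

theorem commutator_eq_zpowers_of_conj_eq_pow {g h : G} {d : ℕ} (hgen : closure {g, h} = ⊤)
    (hh : IsOfFinOrder h) (hconj : g⁻¹ * h * g = h ^ (1 + d)) :
    commutator G = zpowers (h ^ d) := by
  have hconj_d : g⁻¹ * h ^ d * g = (h ^ d) ^ (1 + d) := by
    have h' := conj_pow (a := g⁻¹) (b := h) (i := d)
    rw [inv_inv] at h'
    rw [← h', hconj, ← pow_mul, ← pow_mul, mul_comm]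
  have : (zpowers (h ^ d)).Normal := by
    refine normal_zpowers_of_conj_eq_pow hgen hh.pow ?_
    rintro s (rfl | rfl)
    exacts [⟨1 + d, hconj_d⟩, ⟨1, by group⟩]
  have hcommutator : h ^ d = ⁅h⁻¹, g⁻¹⁆ := by
    rw [commutatorElement_def, inv_inv, inv_inv, mul_assoc, mul_assoc, ← mul_assoc g⁻¹, hconj]
    group
  refine le_antisymm (commutator_le_of_closure_eq_top hgen ?_) ?_
  · have hgh : (h * g)⁻¹ * (g * h) ∈ zpowers (h ^ d) := by
      have : (h * g)⁻¹ * (g * h) = (h ^ d)⁻¹ := by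
        calc (h * g)⁻¹ * (g * h) = (g⁻¹ * h * g)⁻¹ * h := by group
          _ = (h ^ d)⁻¹ := by rw [hconj]; group
      exact this ▸ inv_mem (mem_zpowers _)
    rintro s (rfl | rfl) t (rfl | rfl)
    · simp
    · exact hgh
    · convert inv_mem hgh using 1
      group
    · simp
  · rw [zpowers_le, hcommutator]
    exact commutator_mem_commutator (mem_top _) (mem_top _)

end Commutator

section ZMod

variable {n : ℕ}

theorem ZMod.pow_pow_eq_one_of_dvd_sub_one {p e : ℕ} {x : ZMod (p ^ e)}
    (hx : (p : ZMod (p ^ e)) ∣ x - 1) : x ^ p ^ e = 1 := by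
  have h := dvd_sub_pow_of_dvd_sub hx e
  rw [one_pow, pow_succ, ← Nat.cast_pow, ZMod.natCast_self, zero_mul, zero_dvd_iff,
    sub_eq_zero] at h
  exact h

def zmodPowHom {A : Type*} [Group A] (x : A) (hx : x ^ n = 1) : Multiplicative (ZMod n) →* A :=
  AddMonoidHom.toMultiplicativeLeft <|
    ZMod.lift n ⟨zmultiplesHom (Additive A) (Additive.ofMul x),
      by simpa using congrArg Additive.ofMul hx⟩

theorem zmodPowHom_ofAdd_intCast {A : Type*} [Group A] (x : A) (hx : x ^ n = 1) (k : ℤ) :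
    zmodPowHom x hx (Multiplicative.ofAdd (k : ZMod n)) = x ^ k := by
  simp [zmodPowHom]

theorem zmodPowHom_ofAdd_one {A : Type*} [Group A] (x : A) (hx : x ^ n = 1) :
    zmodPowHom x hx (Multiplicative.ofAdd 1) = x := by
  simpa using zmodPowHom_ofAdd_intCast x hx 1

theorem MonoidHom.ext_zmod {M : Type*} [Group M] {φ ψ : Multiplicative (ZMod n) →* M}
    (h : φ (Multiplicative.ofAdd 1) = ψ (Multiplicative.ofAdd 1)) : φ = ψ := by
  refine MonoidHom.ext fun x ↦ ?_
  obtain ⟨k, hk⟩ := ZMod.intCast_surjective x.toAdd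
  have hx : x = Multiplicative.ofAdd (1 : ZMod n) ^ k := by
    rw [← ofAdd_zsmul, zsmul_one, hk, ofAdd_toAdd]
  rw [hx, map_zpow, map_zpow, h]

end ZMod

namespace Gf

variable {n q : ℕ}

theorem mk_eq_one_of_mem_rels {r : FreeGroup (Fin 2)} (hr : r ∈ fermatRels n q) :
    PresentedGroup.mk (fermatRels n q) r = 1 :=
  (QuotientGroup.eq_one_iff r).mpr (subset_normalClosure hr)

theorem gGen_pow : gGen n q ^ n = 1 := by
  have h := mk_eq_one_of_mem_rels (n := n) (q := q) (Set.mem_insert _ _)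
  rwa [map_pow] at h

theorem hGen_pow : hGen n q ^ n = 1 := by
  have h := mk_eq_one_of_mem_rels (n := n) (q := q)
    (Set.mem_insert_of_mem _ (Set.mem_insert _ _))
  rwa [map_pow] at h

theorem inv_gGen_mul_hGen_mul_gGen : (gGen n q)⁻¹ * hGen n q * gGen n q = hGen n q ^ q := by
  have h := mk_eq_one_of_mem_rels (n := n) (q := q)
    (Set.mem_insert_of_mem _ (Set.mem_insert_of_mem _ rfl))
  simp only [map_mul, map_inv, map_pow] at h
  exact mul_inv_eq_one.mp h

theorem closure_gGen_hGen : closure {gGen n q, hGen n q} = ⊤ := by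
  rw [← PresentedGroup.closure_range_of]
  congr 1
  ext x
  simp [Fin.exists_fin_two, gGen, hGen, eq_comm]

section Lift

variable {H : Type*} [Group H] (x y : H) (hx : x ^ n = 1) (hy : y ^ n = 1)
  (hxy : x⁻¹ * y * x = y ^ q)

def lift : Gf n q →* H :=
  PresentedGroup.toGroup (f := ![x, y]) <| by
    rintro r (rfl | rfl | rfl)
    · simpa using hx
    · simpa using hy
    · simpa [mul_inv_eq_one] using hxy

@[simp]
theorem lift_gGen : lift x y hx hy hxy (gGen n q) = x :=
  PresentedGroup.toGroup.of _

@[simp]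
theorem lift_hGen : lift x y hx hy hxy (hGen n q) = y :=
  PresentedGroup.toGroup.of _

end Lift

theorem hom_ext {H : Type*} [Group H] {φ ψ : Gf n q →* H} (hg : φ (gGen n q) = ψ (gGen n q))
    (hh : φ (hGen n q) = ψ (hGen n q)) : φ = ψ :=
  PresentedGroup.ext fun i ↦ by fin_cases i; exacts [hg, hh]

def affineRep [NeZero n] (hq : (q : ZMod n) ^ n = 1) : Gf n q →* Equiv.Perm (ZMod n) :=
  let u : (ZMod n)ˣ := (Units.ofPowEqOne _ n hq (NeZero.ne n))⁻¹
  lift (MulAction.toPermHom _ (ZMod n) u)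
    (MulAction.toPermHom _ (ZMod n) (Multiplicative.ofAdd (1 : ZMod n)))
    (by rw [← map_pow, inv_pow, Units.pow_ofPowEqOne, inv_one, map_one])
    (by rw [← map_pow, ← ofAdd_nsmul, nsmul_one, ZMod.natCast_self, ofAdd_zero, map_one])
    (by
      have hu : ((u⁻¹ : (ZMod n)ˣ) : ZMod n) = q := by simp [u]
      rw [← map_pow, ← ofAdd_nsmul]
      ext x
      simp [Units.smul_def, ← hu])

theorem orderOf_hGen [NeZero n] (hq : (q : ZMod n) ^ n = 1) : orderOf (hGen n q) = n := by
  refine Nat.dvd_antisymm (orderOf_dvd_of_pow_eq_one hGen_pow) ?_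
  have hinj : Function.Injective (MulAction.toPermHom (Multiplicative (ZMod n)) (ZMod n)) :=
    fun a b hab ↦ by
      have h : a • (0 : ZMod n) = b • 0 := congrArg (· 0) hab
      rwa [← toAdd_vadd, ← toAdd_vadd, vadd_eq_add, vadd_eq_add, add_zero, add_zero] at h
  have h := orderOf_map_dvd (affineRep hq) (hGen n q)
  rwa [affineRep, lift_hGen, orderOf_injective _ hinj, orderOf_ofAdd_eq_addOrderOf,
    ZMod.addOrderOf_one] at h

theorem commutator_eq [NeZero n] (d : ℕ) :
    commutator (Gf n (1 + d)) = zpowers (hGen n (1 + d) ^ d) :=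
  commutator_eq_zpowers_of_conj_eq_pow closure_gGen_hGen
    (isOfFinOrder_iff_pow_eq_one.mpr ⟨n, NeZero.pos n, hGen_pow⟩) inv_gGen_mul_hGen_mul_gGen

section Abelianization

variable {d : ℕ}

def toZModProd (hd : d ∣ n) :
    Gf n (1 + d) →* Multiplicative (ZMod n) × Multiplicative (ZMod d) :=
  lift (.ofAdd 1, 1) (1, .ofAdd 1)
    (by ext <;> simp [← ofAdd_nsmul])
    (by ext <;> simp [← ofAdd_nsmul, (ZMod.natCast_eq_zero_iff n d).mpr hd])
    (by ext <;> simp [← ofAdd_nsmul])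

theorem abelianization_of_hGen_pow : Abelianization.of (hGen n (1 + d)) ^ d = 1 := by
  have h := congrArg Abelianization.of (inv_gGen_mul_hGen_mul_gGen (n := n) (q := 1 + d))
  rw [map_mul, map_mul, map_inv, inv_mul_cancel_comm, map_pow, pow_add, pow_one] at h
  exact (mul_eq_left.mp h.symm)

def ofZModProd :
    Multiplicative (ZMod n) × Multiplicative (ZMod d) →* Abelianization (Gf n (1 + d)) :=
  (zmodPowHom (Abelianization.of (gGen n (1 + d))) (by rw [← map_pow, gGen_pow, map_one])).coprod
    (zmodPowHom _ abelianization_of_hGen_pow)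

theorem ofZModProd_comp_lift_toZModProd (hd : d ∣ n) :
    ofZModProd.comp (Abelianization.lift (toZModProd hd)) = MonoidHom.id _ :=
  Abelianization.hom_ext _ _ <| hom_ext
    (by simp [toZModProd, ofZModProd, zmodPowHom_ofAdd_one])
    (by simp [toZModProd, ofZModProd, zmodPowHom_ofAdd_one])

theorem lift_toZModProd_comp_ofZModProd (hd : d ∣ n) :
    (Abelianization.lift (toZModProd hd)).comp ofZModProd = MonoidHom.id _ := by
  rw [← MonoidHom.coprod_unique ((Abelianization.lift (toZModProd hd)).comp ofZModProd),
    ← MonoidHom.coprod_inl_inr]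
  congr 1 <;> refine MonoidHom.ext_zmod ?_ <;>
    simp [toZModProd, ofZModProd, zmodPowHom_ofAdd_one]

def abelianizationEquiv (hd : d ∣ n) :
    Abelianization (Gf n (1 + d)) ≃* Multiplicative (ZMod n) × Multiplicative (ZMod d) :=
  MonoidHom.toMulEquiv _ _ (ofZModProd_comp_lift_toZModProd hd)
    (lift_toZModProd_comp_ofZModProd hd)

end Abelianization

end Gf

theorem stmt17_general (p e f : ℕ) (hp : p.Prime)
    (hf1 : 1 ≤ f) (hfe : f ≤ e) (n : ℕ) (hn : n = p ^ e) (q : ℕ) (hq : q = 1 + p ^ f) :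
    commutator (Gf n q) = Subgroup.zpowers (hGen n q ^ (p ^ f)) ∧
    Nat.card (Subgroup.zpowers (hGen n q ^ (p ^ f))) = p ^ (e - f) ∧
    Nonempty (Abelianization (Gf n q) ≃*
      Multiplicative (ZMod n) × Multiplicative (ZMod (p ^ f))) := by
  subst hn hq
  have : NeZero (p ^ e) := ⟨pow_ne_zero e hp.ne_zero⟩
  have hdvd : p ^ f ∣ p ^ e := pow_dvd_pow p hfe
  have horder : orderOf (hGen (p ^ e) (1 + p ^ f)) = p ^ e := by
    refine Gf.orderOf_hGen (ZMod.pow_pow_eq_one_of_dvd_sub_one ?_)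
    push_cast
    rw [add_sub_cancel_left]
    exact dvd_pow_self _ (by omega)
  refine ⟨Gf.commutator_eq _, ?_, ⟨Gf.abelianizationEquiv hdvd⟩⟩
  rw [Nat.card_zpowers, orderOf_pow_of_dvd (pow_ne_zero f hp.ne_zero) (horder.symm ▸ hdvd),
    horder, Nat.pow_div hfe hp.pos]

theorem stmt17 (p e f : ℕ) (hp : p.Prime) (hodd : Odd p) (he : 1 ≤ e)
    (hf1 : 1 ≤ f) (hfe : f ≤ e) (n : ℕ) (hn : n = p ^ e) (q : ℕ) (hq : q = 1 + p ^ f) :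
    commutator (Gf n q) = Subgroup.zpowers (hGen n q ^ (p ^ f)) ∧
    Nat.card (Subgroup.zpowers (hGen n q ^ (p ^ f))) = p ^ (e - f) ∧
    Nonempty (Abelianization (Gf n q) ≃*
      Multiplicative (ZMod n) × Multiplicative (ZMod (p ^ f))) :=
  stmt17_general p e f hp hf1 hfe n hn q hq
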